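/- arXiv:1203.0427 — 4 statements merged into one kernel-verified Lean document; each statement's English description precedes it below -/
import Mathlib

section
/- For all t with 0 < t ≤ 1, one has (log(1+t))^2 ≤ log(1+t^2). -/
/-!
From `cosh (2v) = 1 + 2 sinh² v` and `|v| ≤ |sinh v|` one gets `u² ≤ 2 (cosh u - 1)`; at
`u = log x` this reads `(log x)² ≤ (x - 1)² / x`. Hence, for `0 < t ≤ 1`,
`(log (1 + t))² ≤ t² / (1 + t) ≤ t² / (1 + t²) ≤ log (1 + t²)`, the middle step being `t² ≤ t`
and the last one `1 - y⁻¹ ≤ log y`.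
-/

namespace Real

theorem sq_le_two_mul_cosh_sub_one (u : ℝ) : u ^ 2 ≤ 2 * (cosh u - 1) := by
  have h_half : (u / 2) ^ 2 ≤ sinh (u / 2) ^ 2 := by
    rcases le_total 0 u with hu | hu
    · exact pow_le_pow_left₀ (by positivity) (self_le_sinh_iff.mpr (by positivity)) 2
    · have hs : sinh (u / 2) ≤ u / 2 := sinh_le_self_iff.mpr (by linarith)
      nlinarith
  have h_cosh : cosh u = 1 + 2 * sinh (u / 2) ^ 2 := by
    conv_lhs => rw [← mul_div_cancel₀ u two_ne_zero, cosh_two_mul, cosh_sq]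
    ring
  rw [h_cosh]
  linarith

theorem log_sq_le_sub_one_sq_div {x : ℝ} (hx : 0 < x) : log x ^ 2 ≤ (x - 1) ^ 2 / x := by
  calc log x ^ 2 ≤ 2 * (cosh (log x) - 1) := sq_le_two_mul_cosh_sub_one _
    _ = (x - 1) ^ 2 / x := by
      rw [cosh_log hx]
      field_simp
      ring

end Real

theorem log_sq_le (t : ℝ) (h0 : 0 < t) (h1 : t ≤ 1) :
    (Real.log (1 + t)) ^ 2 ≤ Real.log (1 + t ^ 2) := by
  have ht_sq : t ^ 2 ≤ t := by nlinarith
  calc Real.log (1 + t) ^ 2 ≤ t ^ 2 / (1 + t) := by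
        simpa using Real.log_sq_le_sub_one_sq_div (x := 1 + t) (by linarith)
    _ ≤ t ^ 2 / (1 + t ^ 2) := by gcongr
    _ = 1 - (1 + t ^ 2)⁻¹ := by field_simp; ring
    _ ≤ Real.log (1 + t ^ 2) := Real.one_sub_inv_le_log_of_pos (by positivity)
end

section
/- The function h₁(t) = (log(1+t))^2 / log(1+t^2) is strictly decreasing on the interval (0,1). -/
/-!
Write `L u = log (1 + u)`. The sign of the derivative of `L t ^ 2 / L (t ^ 2)` is that of
`(1 + t ^ 2) L (t ^ 2) - t (1 + t) L t`, i.e. of `G (t ^ 2) - G t` for `G u = (1 + u) L u / u`.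
Since `G' u = (u - L u) / u ^ 2 > 0`, `G` is strictly increasing, and `t ^ 2 < t` on `(0, 1)`.
-/

open Real Set

lemma strictMonoOn_of_hasDerivAt_pos {D : Set ℝ} (hD : Convex ℝ D)
    {f f' : ℝ → ℝ} (hf : ∀ x ∈ D, HasDerivAt f (f' x) x) (hf' : ∀ x ∈ D, 0 < f' x) :
    StrictMonoOn f D :=
  strictMonoOn_of_hasDerivWithinAt_pos hD
    (fun x hx => (hf x hx).continuousAt.continuousWithinAt)
    (fun x hx => (hf x (interior_subset hx)).hasDerivWithinAt)
    (fun x hx => hf' x (interior_subset hx))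

lemma strictAntiOn_of_hasDerivAt_neg {D : Set ℝ} (hD : Convex ℝ D)
    {f f' : ℝ → ℝ} (hf : ∀ x ∈ D, HasDerivAt f (f' x) x) (hf' : ∀ x ∈ D, f' x < 0) :
    StrictAntiOn f D :=
  strictAntiOn_of_hasDerivWithinAt_neg hD
    (fun x hx => (hf x hx).continuousAt.continuousWithinAt)
    (fun x hx => (hf x (interior_subset hx)).hasDerivWithinAt)
    (fun x hx => hf' x (interior_subset hx))

lemma hasDerivAt_log_one_add {x : ℝ} (hx : 1 + x ≠ 0) :
    HasDerivAt (fun t => log (1 + t)) (1 / (1 + x)) x :=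
  ((hasDerivAt_id x).const_add 1).log hx

lemma log_one_add_lt_self {x : ℝ} (hx : 0 < x) : log (1 + x) < x := by
  linarith [log_lt_sub_one_of_pos (by linarith : 0 < 1 + x) (by linarith : 1 + x ≠ 1)]

lemma strictMonoOn_one_add_mul_log_one_add_div_self :
    StrictMonoOn (fun u => (1 + u) * log (1 + u) / u) (Ioi 0) := by
  refine strictMonoOn_of_hasDerivAt_pos (convex_Ioi 0)
    (f' := fun u => (u - log (1 + u)) / u ^ 2) (fun u (hu : 0 < u) => ?_)
    (fun u (hu : 0 < u) => div_pos (by linarith [log_one_add_lt_self hu]) (by positivity))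
  have h1u : 1 + u ≠ 0 := by positivity
  have hd : HasDerivAt (fun u => (1 + u) * log (1 + u) / u) _ u :=
    (((hasDerivAt_id' u).const_add 1).mul (hasDerivAt_log_one_add h1u)).div
      (hasDerivAt_id' u) hu.ne'
  convert hd using 1
  simp only [Pi.mul_apply]
  field_simp
  ring

lemma one_add_sq_mul_log_one_add_sq_lt {t : ℝ} (ht0 : 0 < t) (ht1 : t < 1) :
    (1 + t ^ 2) * log (1 + t ^ 2) < t * (1 + t) * log (1 + t) := by
  have hG := strictMonoOn_one_add_mul_log_one_add_div_self (by positivity : (0 : ℝ) < t ^ 2)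
    ht0 (by nlinarith)
  rw [div_lt_div_iff₀ (by positivity) ht0] at hG
  nlinarith

lemma hasDerivAt_log_one_add_sq_div_log_one_add_sq {x : ℝ} (h1x : 1 + x ≠ 0) (hx : x ≠ 0) :
    HasDerivAt (fun t => log (1 + t) ^ 2 / log (1 + t ^ 2))
      (2 * log (1 + x) * ((1 + x ^ 2) * log (1 + x ^ 2) - x * (1 + x) * log (1 + x)) /
        ((1 + x) * (1 + x ^ 2) * log (1 + x ^ 2) ^ 2)) x := by
  have h1x2 : 1 + x ^ 2 ≠ 0 := by positivity
  have hlog : log (1 + x ^ 2) ≠ 0 := (log_pos (lt_add_of_pos_right 1 (by positivity))).ne'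
  have hd : HasDerivAt (fun t => log (1 + t) ^ 2 / log (1 + t ^ 2)) _ x :=
    ((hasDerivAt_log_one_add h1x).pow 2).div
      (((hasDerivAt_pow 2 x).const_add 1).log h1x2) hlog
  convert hd using 1
  simp only [Pi.pow_apply]
  field_simp
  ring

theorem h1_strictAntiOn :
    StrictAntiOn (fun t : ℝ => (Real.log (1 + t)) ^ 2 / Real.log (1 + t ^ 2))
      (Set.Ioo 0 1) := by
  refine strictAntiOn_of_hasDerivAt_neg (convex_Ioo 0 1)
    (fun x hx => hasDerivAt_log_one_add_sq_div_log_one_add_sq (by linarith [hx.1]) hx.1.ne')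
    (fun x ⟨hx0, hx1⟩ => div_neg_of_neg_of_pos ?_ ?_)
  · have hlog : 0 < log (1 + x) := log_pos (by linarith)
    exact mul_neg_of_pos_of_neg (by positivity)
      (sub_neg.2 (one_add_sq_mul_log_one_add_sq_lt hx0 hx1))
  · have hlog : 0 < log (1 + x ^ 2) := log_pos (lt_add_of_pos_right 1 (by positivity))
    positivity
end

section
/- For all t ∈ (0,1], h₁(t) = (log(1+t))^2 / log(1+t^2) ≤ 1. -/
open Real Set

private lemma key_mono :
    MonotoneOn (fun x : ℝ => Real.log (1 + x ^ 2) - (Real.log (1 + x)) ^ 2)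
      (Set.Icc (0:ℝ) 1) := by
  have hderiv : ∀ x ∈ Set.Ioo (0:ℝ) 1,
      HasDerivAt (fun x : ℝ => Real.log (1 + x ^ 2) - (Real.log (1 + x)) ^ 2)
        ((1 + x ^ 2)⁻¹ * (2 * x) - 2 * Real.log (1 + x) ^ 1 * (1 + x)⁻¹) x := by
    intro x hx
    have hx0 : 0 < x := hx.1
    have h1 : (1 : ℝ) + x ^ 2 ≠ 0 := by positivity
    have h2 : (1 : ℝ) + x ≠ 0 := by positivity
    have d1 : HasDerivAt (fun x : ℝ => 1 + x ^ 2) (2 * x) x := by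
      simpa using ((hasDerivAt_pow 2 x).const_add 1)
    have d1' : HasDerivAt (fun x : ℝ => Real.log (1 + x ^ 2))
        ((1 + x ^ 2)⁻¹ * (2 * x)) x := by
      exact (Real.hasDerivAt_log h1).comp x d1
    have d2 : HasDerivAt (fun x : ℝ => 1 + x) 1 x := by
      simpa using (hasDerivAt_id x).const_add 1
    have d2' : HasDerivAt (fun x : ℝ => Real.log (1 + x)) ((1 + x)⁻¹) x := by
      exact ((Real.hasDerivAt_log h2).comp x d2).congr_deriv (mul_one _)
    have d3 : HasDerivAt (fun x : ℝ => (Real.log (1 + x)) ^ 2)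
        (2 * Real.log (1 + x) ^ 1 * (1 + x)⁻¹) x := by
      exact (d2'.fun_pow 2).congr_deriv (by norm_num)
    exact d1'.sub d3
  have hcont : ContinuousOn (fun x : ℝ => Real.log (1 + x ^ 2) - (Real.log (1 + x)) ^ 2)
      (Set.Icc (0:ℝ) 1) := by
    apply ContinuousOn.sub
    · apply ContinuousOn.log (by fun_prop)
      intro x hx
      have := hx.1
      positivity
    · apply ContinuousOn.pow
      apply ContinuousOn.log (by fun_prop)
      intro x hx
      have := hx.1
      nlinarith
  apply monotoneOn_of_deriv_nonneg (convex_Icc 0 1) hcont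
  · intro x hx
    rw [interior_Icc] at hx
    exact ((hderiv x hx).differentiableAt).differentiableWithinAt
  · intro x hx
    rw [interior_Icc] at hx
    rw [(hderiv x hx).deriv]
    have hx0 : 0 < x := hx.1
    have hx1 : x < 1 := hx.2
    have hL : Real.log (1 + x) ≤ x := by
      have := Real.log_le_sub_one_of_pos (show (0:ℝ) < 1 + x by linarith)
      linarith
    have hL0 : 0 ≤ Real.log (1 + x) := Real.log_nonneg (by linarith)
    have h1 : (0:ℝ) < 1 + x ^ 2 := by positivity
    have h2 : (0:ℝ) < 1 + x := by linarith
    rw [sub_nonneg, pow_one]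
    rw [mul_inv_le_iff₀ h2, inv_mul_eq_div, div_mul_eq_mul_div, le_div_iff₀ h1]
    nlinarith [mul_le_mul_of_nonneg_right hL (le_of_lt h1)]

theorem h1_le_one (t : ℝ) (h0 : 0 < t) (h1 : t ≤ 1) :
    (Real.log (1 + t)) ^ 2 / Real.log (1 + t ^ 2) ≤ 1 := by
  have hpos : 0 < Real.log (1 + t ^ 2) := by
    apply Real.log_pos
    nlinarith
  rw [div_le_one hpos]
  have h := key_mono (Set.mem_Icc.mpr ⟨le_refl 0, zero_le_one⟩)
    (Set.mem_Icc.mpr ⟨h0.le, h1⟩) h0.le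
  simp only [Real.log_one, ne_eq, OfNat.ofNat_ne_zero, not_false_eq_true, zero_pow,
    sub_zero, add_zero] at h
  norm_num at h
  linarith
end

section
/- For x, y in the open unit ball of ℝⁿ with the hyperbolic metric ρ defined by tanh²(ρ(x,y)/2) = |x−y|²/(|x−y|² + (1−|x|²)(1−|y|²)), one has for all x,y in the unit ball: |x−y|/(1+|x||y|) ≤ tanh(ρ(x,y)/2) ≤ |x−y|/(1−|x||y|). -/
theorem hyperbolic_tanh_bounds {n : ℕ} (x y : EuclideanSpace ℝ (Fin n))
    (hx : ‖x‖ < 1) (hy : ‖y‖ < 1) (ρ : ℝ) (hρ : 0 ≤ ρ)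
    (hdef : Real.tanh (ρ / 2) ^ 2 =
      ‖x - y‖ ^ 2 / (‖x - y‖ ^ 2 + (1 - ‖x‖ ^ 2) * (1 - ‖y‖ ^ 2))) :
    ‖x - y‖ / (1 + ‖x‖ * ‖y‖) ≤ Real.tanh (ρ / 2) ∧
      Real.tanh (ρ / 2) ≤ ‖x - y‖ / (1 - ‖x‖ * ‖y‖) := by
  set t := Real.tanh (ρ / 2) with htdef
  set a := ‖x‖
  set b := ‖y‖
  set d := ‖x - y‖ with hd
  have ha0 : 0 ≤ a := norm_nonneg x
  have hb0 : 0 ≤ b := norm_nonneg y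
  have hd0 : 0 ≤ d := norm_nonneg _
  have htri : d ≤ a + b := norm_sub_le x y
  have htri2 : |a - b| ≤ d := abs_norm_sub_norm_le x y
  have htri2' : (a - b) ^ 2 ≤ d ^ 2 := by
    nlinarith [abs_nonneg (a - b), sq_abs (a - b)]
  have ht0 : 0 ≤ t := by
    rw [htdef, Real.tanh_eq_sinh_div_cosh]
    exact div_nonneg ((Real.sinh_nonneg_iff.mpr (by linarith))) (Real.cosh_pos _).le
  have hab1 : a * b < 1 := by nlinarith
  have hD : 0 < d ^ 2 + (1 - a ^ 2) * (1 - b ^ 2) := by nlinarith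
  have key : t ^ 2 * (d ^ 2 + (1 - a ^ 2) * (1 - b ^ 2)) = d ^ 2 := by
    rw [hdef]; field_simp
  clear_value t a b d
  clear htdef hd hdef x y
  constructor
  · rw [div_le_iff₀ (by nlinarith)]
    have h1 : d ^ 2 ≤ (t * (1 + a * b)) ^ 2 := by
      nlinarith [mul_nonneg (sq_nonneg t) (by nlinarith : (0:ℝ) ≤ (a + b) ^ 2 - d ^ 2)]
    nlinarith [mul_nonneg ht0 (by nlinarith : (0:ℝ) ≤ 1 + a * b)]
  · rw [le_div_iff₀ (by nlinarith)]
    have h1 : (t * (1 - a * b)) ^ 2 ≤ d ^ 2 := by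
      nlinarith [mul_nonneg (sq_nonneg t) (by nlinarith : (0:ℝ) ≤ d ^ 2 - (a - b) ^ 2)]
    nlinarith [mul_nonneg ht0 (by nlinarith : (0:ℝ) ≤ 1 - a * b)]
end
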